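/- For all factor indices k₁, k₂ ∈ {1,…,r}, the cross-covariance matrix between the scores s_{k₁} and s_{k₂} equals Cov(s_{k₁}, s_{k₂}) = (1/2)·N_{q_{k₁}}·∑_{i=1}^{l_{k₁}} ∑_{j=1}^{l_{k₂}} ( Z_{(k₁,i)}ᵀ·V⁻¹·Z_{(k₂,j)} ) ⊗ ( Z_{(k₁,i)}ᵀ·V⁻¹·Z_{(k₂,j)} ), where ⊗ denotes the Kronecker product of matrices. -/

import Mathlib

open Matrix MeasureTheory ProbabilityTheory

/-- The commutation matrix `K_{q,q}`: the unique `q² × q²` matrix with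
`K_{q,q} · vec A = vec Aᵀ` for every `q × q` matrix `A` (column-major `vec`). -/
def commMat (q : ℕ) : Matrix (Fin q × Fin q) (Fin q × Fin q) ℝ := fun a b =>
  if a.1 = b.2 ∧ a.2 = b.1 then 1 else 0

/-- The symmetrization matrix `N_q = (1/2)(I_{q²} + K_{q,q})`. -/
noncomputable def Nmat (q : ℕ) : Matrix (Fin q × Fin q) (Fin q × Fin q) ℝ :=
  (1 / 2 : ℝ) • (1 + commMat q)

open Real
open scoped NNReal ENNReal

/-!
Writing `e = σ R u`, every entry of a score is `(1/2) (∑ⱼ (αⱼ ⬝ u) (βⱼ ⬝ u) - c)`, where `αⱼ, βⱼ`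
are rows of `Zⱼᵀ V⁻¹ R` and `c` is a constant. Independence together with the standard Gaussian
moments `0, 1, 0, 3` (Stein's identity `E[X^(k+2)] = (k+1) E[X^k]`) gives Isserlis' formula
`E[u_a u_b u_c u_d] = δ_ab δ_cd + δ_ac δ_bd + δ_ad δ_bc`, hence
`Cov((α ⬝ u)(β ⬝ u), (γ ⬝ u)(δ ⬝ u)) = (α ⬝ γ)(β ⬝ δ) + (α ⬝ δ)(β ⬝ γ)`.
Since `R Rᵀ = V`, the inner products of rows are entries of `Zᵢᵀ V⁻¹ Zⱼ`, and the two terms are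
the identity and the commutation part of `2 N_q` applied to `∑ᵢⱼ (Zᵢᵀ V⁻¹ Zⱼ) ⊗ (Zᵢᵀ V⁻¹ Zⱼ)`.
-/

namespace Matrix

lemma dotProduct_mul_dotProduct_eq_sum {ι : Type*} [Fintype ι] (α β w : ι → ℝ) :
    (α ⬝ᵥ w) * (β ⬝ᵥ w) = ∑ p : ι × ι, α p.1 * β p.2 * (w p.1 * w p.2) := by
  simp only [dotProduct, Finset.sum_mul_sum, Fintype.sum_prod_type]
  exact Finset.sum_congr rfl fun i _ => Finset.sum_congr rfl fun j _ => by ring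

end Matrix

namespace ProbabilityTheory

lemma integrable_pow_gaussianReal {m : ℝ} {v : ℝ≥0} (k : ℕ) :
    Integrable (fun x : ℝ => x ^ k) (gaussianReal m v) := by
  have h : MemLp id k (gaussianReal m v) := by exact_mod_cast memLp_id_gaussianReal (k : ℝ≥0)
  exact h.integrable_norm_pow'.mono' (by fun_prop) (ae_of_all _ fun x => by simp)

lemma integrable_pow_mul_gaussianPDFReal (k : ℕ) :
    Integrable (fun x : ℝ => x ^ k * gaussianPDFReal 0 1 x) := by
  have h := integrable_pow_gaussianReal (m := 0) (v := 1) k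
  rw [gaussianReal_of_var_ne_zero _ one_ne_zero,
    integrable_withDensity_iff_integrable_smul' (measurable_gaussianPDF 0 1)
      (ae_of_all _ fun _ => gaussianPDF_lt_top)] at h
  refine h.congr (ae_of_all _ fun x => ?_)
  simp [gaussianPDF, ENNReal.toReal_ofReal (gaussianPDFReal_nonneg 0 1 x), mul_comm]

lemma hasDerivAt_gaussianPDFReal (x : ℝ) :
    HasDerivAt (gaussianPDFReal 0 1) (-x * gaussianPDFReal 0 1 x) x := by
  have hφ : gaussianPDFReal 0 1 = fun x => (√(2 * π))⁻¹ * rexp (-x ^ 2 / 2) := by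
    ext x; simp [gaussianPDFReal]
  have hexponent : HasDerivAt (fun y : ℝ => -y ^ 2 / 2) (-x) x := by
    have h := (hasDerivAt_pow 2 x).const_mul (-1 / 2 : ℝ)
    rw [show (fun y : ℝ => -1 / 2 * y ^ 2) = fun y => -y ^ 2 / 2 by ext; ring] at h
    exact h.congr_deriv (by push_cast; ring)
  rw [hφ]
  exact (hexponent.exp.const_mul _).congr_deriv (by ring)

lemma integral_pow_add_two_gaussianReal (k : ℕ) :
    ∫ x, x ^ (k + 2) ∂gaussianReal 0 1 = (k + 1) * ∫ x, x ^ k ∂gaussianReal 0 1 := by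
  have hparts := integral_mul_deriv_eq_deriv_mul_of_integrable
    (u := fun x : ℝ => x ^ (k + 1)) (u' := fun x => (k + 1) * x ^ k)
    (v := gaussianPDFReal 0 1) (v' := fun x => -x * gaussianPDFReal 0 1 x)
    (fun x _ => by simpa using hasDerivAt_pow (k + 1) x)
    (fun x _ => hasDerivAt_gaussianPDFReal x)
    ((integrable_pow_mul_gaussianPDFReal (k + 2)).neg.congr (ae_of_all _ fun x => by simp; ring))
    (((integrable_pow_mul_gaussianPDFReal k).const_mul (k + 1)).congr
      (ae_of_all _ fun x => by simp; ring))
    (integrable_pow_mul_gaussianPDFReal (k + 1))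
  have hlhs (x : ℝ) : x ^ (k + 1) * (-x * gaussianPDFReal 0 1 x) =
      -(gaussianPDFReal 0 1 x * x ^ (k + 2)) := by ring
  have hrhs (x : ℝ) : (k + 1) * x ^ k * gaussianPDFReal 0 1 x =
      (k + 1) * (gaussianPDFReal 0 1 x * x ^ k) := by ring
  simp only [hlhs, hrhs, integral_neg, integral_const_mul, neg_inj] at hparts
  simpa only [integral_gaussianReal_eq_integral_smul one_ne_zero, smul_eq_mul] using hparts

lemma integral_pow_two_gaussianReal : ∫ x, x ^ 2 ∂gaussianReal 0 1 = 1 := by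
  simpa using integral_pow_add_two_gaussianReal 0

lemma integral_pow_four_gaussianReal : ∫ x, x ^ 4 ∂gaussianReal 0 1 = 3 := by
  rw [integral_pow_add_two_gaussianReal 2, integral_pow_two_gaussianReal]
  norm_num

lemma prod_moment_pair {ι : Type*} [Fintype ι] [DecidableEq ι] (M : ℕ → ℝ) (h0 : M 0 = 1)
    (h1 : M 1 = 0) (h2 : M 2 = 1) (a b : ι) :
    ∏ i, M ((if a = i then 1 else 0) + (if b = i then 1 else 0)) = if a = b then 1 else 0 := by
  rw [← Finset.prod_subset (Finset.subset_univ {a, b}) fun i _ hi => by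
    simp only [Finset.mem_insert, Finset.mem_singleton, not_or] at hi
    simp [Ne.symm hi.1, Ne.symm hi.2, h0]]
  by_cases hab : a = b <;> simp_all [Finset.prod_insert, Ne.symm]

-- No condition on `M 3` is needed: an index occurring three times leaves one occurring once.
lemma prod_moment_quadruple {ι : Type*} [Fintype ι] [DecidableEq ι] (M : ℕ → ℝ) (h0 : M 0 = 1)
    (h1 : M 1 = 0) (h2 : M 2 = 1) (h4 : M 4 = 3) (a b c d : ι) :
    ∏ i, M ((if a = i then 1 else 0) + (if b = i then 1 else 0) + (if c = i then 1 else 0) +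
      (if d = i then 1 else 0)) =
      (if a = b then 1 else 0) * (if c = d then 1 else 0) +
      (if a = c then 1 else 0) * (if b = d then 1 else 0) +
      (if a = d then 1 else 0) * (if b = c then 1 else 0) := by
  rw [← Finset.prod_subset (Finset.subset_univ {a, b, c, d}) fun i _ hi => by
    simp only [Finset.mem_insert, Finset.mem_singleton, not_or] at hi
    simp [Ne.symm hi.1, Ne.symm hi.2.1, Ne.symm hi.2.2.1, Ne.symm hi.2.2.2, h0]]
  by_cases hab : a = b <;> by_cases hac : a = c <;> by_cases had : a = d <;>
    by_cases hbc : b = c <;> by_cases hbd : b = d <;> by_cases hcd : c = d <;>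
    simp_all [Finset.prod_insert, Ne.symm]
  norm_num

lemma covariance_const_mul_sub_const {Ω : Type*} [MeasurableSpace Ω] {μ : Measure Ω}
    [IsProbabilityMeasure μ] {X Y : Ω → ℝ} (hX : Integrable X μ) (hY : Integrable Y μ)
    (a b c d : ℝ) :
    cov[fun ω => a * (X ω - c), fun ω => b * (Y ω - d); μ] = a * b * cov[X, Y; μ] := by
  rw [covariance_const_mul_left, covariance_const_mul_right, covariance_sub_const_left hX,
    covariance_sub_const_right hY]
  ring

structure IsStdGaussianVector {Ω ι : Type*} [MeasurableSpace Ω] (μ : Measure Ω)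
    (u : Ω → ι → ℝ) : Prop where
  iIndepFun : iIndepFun (fun i ω => u ω i) μ
  map_eq : ∀ i, μ.map (fun ω => u ω i) = gaussianReal 0 1

namespace IsStdGaussianVector

variable {Ω ι : Type*} [MeasurableSpace Ω] {μ : Measure Ω} {u : Ω → ι → ℝ}

lemma aemeasurable (hu : IsStdGaussianVector μ u) (i : ι) : AEMeasurable (fun ω => u ω i) μ :=
  .of_map_ne_zero (hu.map_eq i ▸ IsProbabilityMeasure.ne_zero _)

lemma memLp (hu : IsStdGaussianVector μ u) (i : ι) {p : ℝ≥0∞} (hp : p ≠ ∞) :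
    MemLp (fun ω => u ω i) p μ := by
  have h := memLp_id_gaussianReal' (μ := 0) (v := 1) p hp
  rw [← hu.map_eq i] at h
  exact (memLp_map_measure_iff aestronglyMeasurable_id (hu.aemeasurable i)).1 h

lemma memLp_two_mul (hu : IsStdGaussianVector μ u) (i j : ι) :
    MemLp (fun ω => u ω i * u ω j) 2 μ := by
  have : ENNReal.HolderTriple 4 4 2 := ⟨by
    rw [show (4 : ℝ≥0∞) = 2 * 2 by norm_num, ENNReal.mul_inv (by simp) (by simp), ← add_mul,
      ENNReal.inv_two_add_inv_two, one_mul]⟩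
  exact (hu.memLp j (p := 4) (by simp)).mul' (hu.memLp i (p := 4) (by simp))

variable [Fintype ι]

lemma integral_prod_pow (hu : IsStdGaussianVector μ u) (m : ι → ℕ) :
    ∫ ω, ∏ i, u ω i ^ m i ∂μ = ∏ i, ∫ x, x ^ m i ∂gaussianReal 0 1 := by
  rw [hu.iIndepFun.integral_fun_prod_comp (f := fun i x => x ^ m i) hu.aemeasurable
    fun i => by fun_prop]
  refine Finset.prod_congr rfl fun i _ => ?_
  rw [← hu.map_eq i, integral_map (hu.aemeasurable i) (by fun_prop)]

lemma memLp_dotProduct_mul (hu : IsStdGaussianVector μ u) (α β : ι → ℝ) :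
    MemLp (fun ω => (α ⬝ᵥ u ω) * (β ⬝ᵥ u ω)) 2 μ := by
  simp_rw [dotProduct_mul_dotProduct_eq_sum]
  exact memLp_finsetSum _ fun (p : ι × ι) _ => (hu.memLp_two_mul p.1 p.2).const_mul _

lemma memLp_sum_dotProduct_mul (hu : IsStdGaussianVector μ u) {J : Type*} [Fintype J]
    (α β : J → ι → ℝ) : MemLp (fun ω => ∑ j, (α j ⬝ᵥ u ω) * (β j ⬝ᵥ u ω)) 2 μ :=
  memLp_finsetSum _ fun j _ => hu.memLp_dotProduct_mul (α j) (β j)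

variable [DecidableEq ι]

lemma integral_mul (hu : IsStdGaussianVector μ u) (a b : ι) :
    ∫ ω, u ω a * u ω b ∂μ = if a = b then 1 else 0 := by
  have hprod (x : ι → ℝ) :
      ∏ i, x i ^ ((if a = i then 1 else 0) + (if b = i then 1 else 0)) = x a * x b := by
    simp only [pow_add, Finset.prod_mul_distrib, Finset.prod_pow_boole, Finset.mem_univ, if_true]
  simp_rw [← hprod, hu.integral_prod_pow]
  exact prod_moment_pair (fun k => ∫ x, x ^ k ∂gaussianReal 0 1) (by simp)
    (by simp [integral_id_gaussianReal]) integral_pow_two_gaussianReal a b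

lemma integral_mul_mul_mul (hu : IsStdGaussianVector μ u) (a b c d : ι) :
    ∫ ω, u ω a * u ω b * u ω c * u ω d ∂μ =
      (if a = b then 1 else 0) * (if c = d then 1 else 0) +
      (if a = c then 1 else 0) * (if b = d then 1 else 0) +
      (if a = d then 1 else 0) * (if b = c then 1 else 0) := by
  have hprod (x : ι → ℝ) : ∏ i, x i ^ ((if a = i then 1 else 0) + (if b = i then 1 else 0) +
      (if c = i then 1 else 0) + (if d = i then 1 else 0)) = x a * x b * x c * x d := by
    simp only [pow_add, Finset.prod_mul_distrib, Finset.prod_pow_boole, Finset.mem_univ, if_true]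
  simp_rw [← hprod, hu.integral_prod_pow]
  exact prod_moment_quadruple (fun k => ∫ x, x ^ k ∂gaussianReal 0 1) (by simp)
    (by simp [integral_id_gaussianReal]) integral_pow_two_gaussianReal
    integral_pow_four_gaussianReal a b c d

variable [IsProbabilityMeasure μ]

lemma covariance_mul_mul (hu : IsStdGaussianVector μ u) (i j k l : ι) :
    cov[fun ω => u ω i * u ω j, fun ω => u ω k * u ω l; μ] =
      (if i = k then 1 else 0) * (if j = l then 1 else 0) +
      (if i = l then 1 else 0) * (if j = k then 1 else 0) := by
  rw [covariance_eq_sub (hu.memLp_two_mul i j) (hu.memLp_two_mul k l)]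
  simp only [Pi.mul_apply, ← mul_assoc]
  rw [hu.integral_mul_mul_mul, hu.integral_mul, hu.integral_mul]
  ring

lemma covariance_dotProduct_mul (hu : IsStdGaussianVector μ u) (α β γ δ : ι → ℝ) :
    cov[fun ω => (α ⬝ᵥ u ω) * (β ⬝ᵥ u ω), fun ω => (γ ⬝ᵥ u ω) * (δ ⬝ᵥ u ω); μ] =
      (α ⬝ᵥ γ) * (β ⬝ᵥ δ) + (α ⬝ᵥ δ) * (β ⬝ᵥ γ) := by
  have hmemLp (f g : ι → ℝ) (p : ι × ι) :
      MemLp (fun ω => f p.1 * g p.2 * (u ω p.1 * u ω p.2)) 2 μ :=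
    (hu.memLp_two_mul p.1 p.2).const_mul _
  simp_rw [dotProduct_mul_dotProduct_eq_sum]
  rw [covariance_fun_sum_fun_sum (hmemLp α β) (hmemLp γ δ)]
  simp_rw [covariance_const_mul_left, covariance_const_mul_right, hu.covariance_mul_mul]
  simp only [mul_ite, mul_one, mul_zero, mul_add, Finset.sum_add_distrib, Fintype.sum_prod_type,
    Finset.sum_ite_eq, Finset.mem_univ, ↓reduceIte, Finset.sum_ite_irrel, Finset.sum_const_zero,
    dotProduct, Finset.sum_mul_sum]
  congr 1 <;> exact Finset.sum_congr rfl fun _ _ => Finset.sum_congr rfl fun _ _ => by ring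

lemma covariance_sum_dotProduct_mul (hu : IsStdGaussianVector μ u) {J J' : Type*} [Fintype J]
    [Fintype J'] (α β : J → ι → ℝ) (γ δ : J' → ι → ℝ) :
    cov[fun ω => ∑ i, (α i ⬝ᵥ u ω) * (β i ⬝ᵥ u ω), fun ω => ∑ j, (γ j ⬝ᵥ u ω) * (δ j ⬝ᵥ u ω); μ] =
      ∑ i, ∑ j, ((α i ⬝ᵥ γ j) * (β i ⬝ᵥ δ j) + (α i ⬝ᵥ δ j) * (β i ⬝ᵥ γ j)) := by
  rw [covariance_fun_sum_fun_sum (fun i => hu.memLp_dotProduct_mul _ _)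
    (fun j => hu.memLp_dotProduct_mul _ _)]
  simp_rw [hu.covariance_dotProduct_mul]

end IsStdGaussianVector

end ProbabilityTheory

lemma commMat_mul_apply {q : ℕ} {κ : Type*} (M : Matrix (Fin q × Fin q) κ ℝ) (a : Fin q × Fin q)
    (b : κ) : (commMat q * M) a b = M a.swap b := by
  have hcond (c : Fin q × Fin q) : (a.1 = c.2 ∧ a.2 = c.1) ↔ a.swap = c := by
    rw [Prod.ext_iff]; exact ⟨fun h => ⟨h.2, h.1⟩, fun h => ⟨h.2, h.1⟩⟩
  simp [commMat, Matrix.mul_apply, hcond]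

lemma Nmat_mul_apply {q : ℕ} {κ : Type*} (M : Matrix (Fin q × Fin q) κ ℝ) (a : Fin q × Fin q)
    (b : κ) : (Nmat q * M) a b = (M a b + M a.swap b) / 2 := by
  simp [Nmat, Matrix.add_mul, commMat_mul_apply]
  ring

namespace Matrix

lemma inv_sq_smul_vecMulVec_smul {n : Type*} {σ : ℝ} (hσ : σ ≠ 0) (x : n → ℝ) :
    (σ ^ 2)⁻¹ • vecMulVec (σ • x) (σ • x) = vecMulVec x x := by
  have hcancel : (σ ^ 2)⁻¹ * σ * σ = 1 := by field_simp
  rw [smul_vecMulVec, vecMulVec_smul, smul_smul, smul_smul, hcancel, one_smul]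

variable {n q q' : Type*} [Fintype n] [DecidableEq n] {V : Matrix n n ℝ}

lemma conj_inv_vecMulVec_sub [Fintype q] (hV : V⁻¹ᵀ = V⁻¹) (hdet : IsUnit V.det)
    (Z : Matrix n q ℝ) (x : n → ℝ) :
    Zᵀ * V⁻¹ * (vecMulVec x x - V) * V⁻¹ * Z =
      vecMulVec ((Zᵀ * V⁻¹) *ᵥ x) ((Zᵀ * V⁻¹) *ᵥ x) - Zᵀ * V⁻¹ * Z := by
  have hright : x ᵥ* V⁻¹ ᵥ* Z = (Zᵀ * V⁻¹) *ᵥ x := by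
    rw [vecMul_vecMul, ← mulVec_transpose, transpose_mul, hV]
  have hcancel : Zᵀ * V⁻¹ * V * V⁻¹ * Z = Zᵀ * V⁻¹ * Z := by
    rw [Matrix.mul_assoc (Zᵀ * V⁻¹), mul_nonsing_inv V hdet, Matrix.mul_one]
  rw [Matrix.mul_sub, Matrix.sub_mul, Matrix.sub_mul, mul_vecMulVec, vecMulVec_mul, vecMulVec_mul,
    hright, hcancel]

lemma row_dotProduct_row {R : Matrix n n ℝ} (hR : R * Rᵀ = V) (hV : V⁻¹ᵀ = V⁻¹)
    (hdet : IsUnit V.det) (Z : Matrix n q ℝ) (Z' : Matrix n q' ℝ) (y : q) (y' : q') :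
    (Zᵀ * V⁻¹ * R) y ⬝ᵥ (Z'ᵀ * V⁻¹ * R) y' = (Zᵀ * V⁻¹ * Z') y y' := by
  have hgram : Zᵀ * V⁻¹ * R * (Z'ᵀ * V⁻¹ * R)ᵀ = Zᵀ * V⁻¹ * Z' := by
    simp only [transpose_mul, transpose_transpose, hV, Matrix.mul_assoc]
    rw [← Matrix.mul_assoc R, hR, ← Matrix.mul_assoc V, mul_nonsing_inv V hdet, Matrix.one_mul]
  exact congrFun (congrFun hgram y) y'

end Matrix

lemma score_apply {n q J : Type*} [Fintype n] [DecidableEq n] [Fintype q] [Fintype J]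
    {V R : Matrix n n ℝ} (hV : V⁻¹ᵀ = V⁻¹) (hdet : IsUnit V.det) {σ : ℝ} (hσ : σ ≠ 0) (Z : J → Matrix n q ℝ) (w : n → ℝ) (x y : q) :
    ((1 / 2 : ℝ) • ∑ j, (Z j)ᵀ * V⁻¹ *
        ((σ ^ 2)⁻¹ • vecMulVec (σ • (R *ᵥ w)) (σ • (R *ᵥ w)) - V) * V⁻¹ * Z j) y x =
      1 / 2 * (∑ j, (((Z j)ᵀ * V⁻¹ * R) y ⬝ᵥ w) * (((Z j)ᵀ * V⁻¹ * R) x ⬝ᵥ w) -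
        ∑ j, ((Z j)ᵀ * V⁻¹ * Z j) y x) := by
  simp only [inv_sq_smul_vecMulVec_smul hσ, conj_inv_vecMulVec_sub hV hdet, mulVec_mulVec,
    Matrix.smul_apply, Matrix.sub_apply, Matrix.sum_apply, vecMulVec_apply, Finset.sum_sub_distrib,
    smul_eq_mul]
  rfl

theorem stmt6 {Ω : Type*} [MeasurableSpace Ω] (μ : Measure Ω) [IsProbabilityMeasure μ]
    (n r : ℕ) (σ : ℝ) (hσ : 0 < σ)
    (V R : Matrix (Fin n) (Fin n) ℝ) (hVpd : V.PosDef) (hR : R * Rᵀ = V)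
    (l q : Fin r → ℕ)
    (Z : (k : Fin r) → Fin (l k) → Matrix (Fin n) (Fin (q k)) ℝ)
    (u : Ω → Fin n → ℝ)
    (huindep : iIndepFun (fun i ω => u ω i) μ)
    (hulaw : ∀ i, Measure.map (fun ω => u ω i) μ = gaussianReal 0 1)
    (e : Ω → Fin n → ℝ) (he : ∀ ω, e ω = σ • (R *ᵥ u ω))
    (s : (k : Fin r) → Ω → (Fin (q k) × Fin (q k)) → ℝ)
    (hs : ∀ k ω idx, s k ω idx =
      ((1 / 2 : ℝ) •
        ∑ j, (Z k j)ᵀ * V⁻¹ * ((σ ^ 2)⁻¹ • vecMulVec (e ω) (e ω) - V) * V⁻¹ * Z k j)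
        idx.2 idx.1) :
    ∀ (k₁ k₂ : Fin r) (a : Fin (q k₁) × Fin (q k₁)) (b : Fin (q k₂) × Fin (q k₂)),
      (∫ ω, s k₁ ω a * s k₂ ω b ∂μ) - (∫ ω, s k₁ ω a ∂μ) * (∫ ω, s k₂ ω b ∂μ) =
        ((1 / 2 : ℝ) • (Nmat (q k₁) *
          ∑ i, ∑ j, kroneckerMap (· * ·) ((Z k₁ i)ᵀ * V⁻¹ * Z k₂ j)
            ((Z k₁ i)ᵀ * V⁻¹ * Z k₂ j))) a b := by
  intro k₁ k₂ a b
  have hu : IsStdGaussianVector μ u := ⟨huindep, hulaw⟩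
  have hdet : IsUnit V.det := (isUnit_iff_isUnit_det V).1 hVpd.isUnit
  have hinvT : V⁻¹ᵀ = V⁻¹ := by
    rw [transpose_nonsing_inv, ← conjTranspose_eq_transpose_of_trivial, hVpd.isHermitian.eq]
  have hscore (k : Fin r) (idx : Fin (q k) × Fin (q k)) : (fun ω => s k ω idx) = fun ω =>
      1 / 2 * (∑ j, (((Z k j)ᵀ * V⁻¹ * R) idx.2 ⬝ᵥ u ω) * (((Z k j)ᵀ * V⁻¹ * R) idx.1 ⬝ᵥ u ω) -
        ∑ j, ((Z k j)ᵀ * V⁻¹ * Z k j) idx.2 idx.1) :=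
    funext fun ω => by rw [hs, he, score_apply hinvT hdet hσ.ne']
  have hmemLp (k : Fin r) (idx : Fin (q k) × Fin (q k)) : MemLp (fun ω => s k ω idx) 2 μ :=
    hscore k idx ▸ ((hu.memLp_sum_dotProduct_mul _ _).sub (memLp_const _)).const_mul _
  have hcov := covariance_eq_sub (hmemLp k₁ a) (hmemLp k₂ b)
  simp only [Pi.mul_apply] at hcov
  rw [← hcov, hscore, hscore, covariance_const_mul_sub_const
    ((hu.memLp_sum_dotProduct_mul _ _).integrable one_le_two)
    ((hu.memLp_sum_dotProduct_mul _ _).integrable one_le_two), hu.covariance_sum_dotProduct_mul]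
  simp only [row_dotProduct_row hR hinvT hdet, Matrix.smul_apply, Nmat_mul_apply, Matrix.sum_apply,
    kroneckerMap_apply, Prod.fst_swap, Prod.snd_swap, smul_eq_mul, Finset.sum_add_distrib,
    mul_comm (((Z k₁ _)ᵀ * V⁻¹ * Z k₂ _) a.2 b.2)]
  ring
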